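/- arXiv:1809.03309 — 2 statements merged into one kernel-verified Lean document; each statement's English description precedes it below -/
import Mathlib

section
/- Suppose the TIN-convexity conditions (C1) and (C2) hold. Then the general TIN-achievable GDoF region is a polyhedron: P* = P_id(𝒦); in particular, P* equals the set of all d ∈ ℝ_{≥0}^𝒦 satisfying the TIN cyclic system for the identity decoding order, and P* is convex. -/
/-!
Write `R = r + α_kk` for the received level of a user. Under any decoding order the rates of the
active users of a cell telescope along that order, so their sum is at most the received level of
the last one decoded minus the interference from every other cell. Chaining these bounds around a
cycle of cells that all have active users cancels the powers, and (C1) replaces the top active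
user of each cell by the selected one; cells without active users are dropped from the cycle,
(C2) being exactly the triangle inequality this needs.

Conversely, if `d` satisfies the cyclic system, the allocation
`r_k^l = x_k + ∑_{s ≤ l} d_k^s - α_kk^l` realises `d` in `P_id(𝒦)` as soon as the cell offsets
satisfy the difference constraints `0 ≤ x_k ≤ min_l (α_kk^l - ∑_{s ≤ l} d_k^s)` and
`x_j ≤ x_k + min_l (α_jj^l - α_jk^l - ∑_{s ≤ l} d_j^s)`. The cyclic inequalities say that the
constraint graph has no negative cycle, so shortest simple-path lengths provide `x`. Convexity is
that of a polyhedron.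
-/

open Finset

/-- The set of users `𝒦`: a cell `k : Fin K` together with a user index in `Fin (L k)`. -/
abbrev User {K : ℕ} (L : Fin K → ℕ) := (k : Fin K) × Fin (L k)

/-- The cyclically previous index in `Fin m` (i.e. `j - 1` modulo `m`). -/
def prevIdx {m : ℕ} (j : Fin m) : Fin m :=
  ⟨(j.val + (m - 1)) % m, Nat.mod_lt _ j.pos⟩

/-- The cyclically next index in `Fin m` (i.e. `j + 1` modulo `m`). -/
def nextIdx {m : ℕ} (j : Fin m) : Fin m :=
  ⟨(j.val + 1) % m, Nat.mod_lt _ j.pos⟩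

/-- The identity decoding order. -/
def idOrder {K : ℕ} (L : Fin K → ℕ) : (k : Fin K) → Equiv.Perm (Fin (L k)) :=
  fun _ => Equiv.refl _

/-- The term `max({0} ∪ {r_k^{[π_k(l')]} + α_{kk}^{[π_k(l')]} : l' < l, (π_k(l'),k) ∈ S}
∪ {r_j^{[l_j]} + α_{jk}^{[l_j]} : (l_j,j) ∈ S, j ≠ k})` in the polyhedral TIN constraints
(expressed as a supremum of the corresponding finite nonempty set of reals). -/
noncomputable def innerMax {K : ℕ} (L : Fin K → ℕ)
    (α : (k : Fin K) → Fin (L k) → Fin K → ℝ)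
    (π : (k : Fin K) → Equiv.Perm (Fin (L k)))
    (S : Set (User L)) (r : (k : Fin K) → Fin (L k) → ℝ)
    (k : Fin K) (l : Fin (L k)) : ℝ :=
  sSup (insert (0 : ℝ)
    ({x : ℝ | ∃ l' : Fin (L k), l' < l ∧ (⟨k, π k l'⟩ : User L) ∈ S ∧
        x = r k (π k l') + α k (π k l') k} ∪
     {x : ℝ | ∃ (j : Fin K) (lj : Fin (L j)), j ≠ k ∧ (⟨j, lj⟩ : User L) ∈ S ∧
        x = r j lj + α j lj k}))

/-- The polyhedral TIN region `P_π(S)`: `d` is nonnegative, vanishes outside `S`, and is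
realized by some power allocation `r ≤ 0` on `S`. -/
def polyTIN {K : ℕ} (L : Fin K → ℕ)
    (α : (k : Fin K) → Fin (L k) → Fin K → ℝ)
    (π : (k : Fin K) → Equiv.Perm (Fin (L k)))
    (S : Set (User L))
    (d : (k : Fin K) → Fin (L k) → ℝ) : Prop :=
  (∀ (k : Fin K) (l : Fin (L k)), 0 ≤ d k l) ∧
  (∀ (k : Fin K) (l : Fin (L k)), (⟨k, l⟩ : User L) ∉ S → d k l = 0) ∧
  ∃ r : (k : Fin K) → Fin (L k) → ℝ,
    (∀ (k : Fin K) (l : Fin (L k)), (⟨k, l⟩ : User L) ∈ S → r k l ≤ 0) ∧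
    (∀ (k : Fin K) (l : Fin (L k)), (⟨k, π k l⟩ : User L) ∈ S →
      d k (π k l) ≤ r k (π k l) + α k (π k l) k - innerMax L α π S r k l)

/-- The TIN-achievable region `P*_π` for decoding order `π`: as `P_π(𝒦)` but with the
positive part `max(0, ·)` of the upper bound. -/
def starTIN {K : ℕ} (L : Fin K → ℕ)
    (α : (k : Fin K) → Fin (L k) → Fin K → ℝ)
    (π : (k : Fin K) → Equiv.Perm (Fin (L k)))
    (d : (k : Fin K) → Fin (L k) → ℝ) : Prop :=
  (∀ (k : Fin K) (l : Fin (L k)), 0 ≤ d k l) ∧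
  ∃ r : (k : Fin K) → Fin (L k) → ℝ,
    (∀ (k : Fin K) (l : Fin (L k)), r k l ≤ 0) ∧
    (∀ (k : Fin K) (l : Fin (L k)),
      d k (π k l) ≤ max 0 (r k (π k l) + α k (π k l) k - innerMax L α π Set.univ r k l))

/-- The TIN cyclic system of GDoF inequalities for decoding order `π`:
(i) per-cell MAC-type bounds, and (ii) cyclic bounds over sequences of distinct cells. -/
def cyclicSystem {K : ℕ} (L : Fin K → ℕ)
    (α : (k : Fin K) → Fin (L k) → Fin K → ℝ)
    (π : (k : Fin K) → Equiv.Perm (Fin (L k)))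
    (d : (k : Fin K) → Fin (L k) → ℝ) : Prop :=
  (∀ (k : Fin K) (l : Fin (L k)),
      ∑ s ∈ Finset.Iic l, d k (π k s) ≤ α k (π k l) k) ∧
  (∀ m : ℕ, 2 ≤ m → m ≤ K → ∀ c : Fin m → Fin K, Function.Injective c →
    ∀ lsel : (j : Fin m) → Fin (L (c j)),
      ∑ j, (∑ s ∈ Finset.Iic (lsel j), d (c j) (π (c j) s)) ≤
      ∑ j, (α (c j) (π (c j) (lsel j)) (c j) -
            α (c j) (π (c j) (lsel j)) (c (prevIdx j))))

theorem Fin.succ_sub_one {n : ℕ} (i : Fin (n + 1)) : i.succ - 1 = i.castSucc :=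
  (eq_sub_of_add_eq Fin.coeSucc_eq_succ).symm

theorem Fin.zero_sub_one {n : ℕ} : (0 : Fin (n + 1)) - 1 = Fin.last n := by
  ext; simp [Fin.coe_neg_one]

theorem prevIdx_eq_sub_one {n : ℕ} (j : Fin (n + 1)) : prevIdx j = j - 1 := by
  ext
  rw [Fin.coe_sub_one]
  split_ifs with h
  · simp [prevIdx, h]
  · have hj : j.val + n = (j.val - 1) + (n + 1) := by
      have : j.val ≠ 0 := fun e => h (Fin.ext e)
      omega
    simp only [prevIdx, Nat.add_sub_cancel, hj, Nat.add_mod_right]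
    exact Nat.mod_eq_of_lt (by omega)

section CyclicSum

variable {ι κ : Type*} {cell : ι → κ} {g : ι → ι → ℝ}

lemma sum_cycle_castSucc_le
    (htri : ∀ a b a', cell a ≠ cell b → cell b ≠ cell a' → cell a ≠ cell a' →
      g a a' ≤ g a b + g b a')
    {n : ℕ} (v : Fin (n + 3) → ι) (hv : Function.Injective (cell ∘ v)) :
    ∑ i : Fin (n + 2), g (v i.castSucc) (v (i - 1).castSucc) ≤ ∑ j, g (v j) (v (j - 1)) := by
  have hne {i j : Fin (n + 3)} (h : i ≠ j) : cell (v i) ≠ cell (v j) := fun e => h (hv e)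
  have key := htri (v 0) (v (Fin.last _)) (v (Fin.last (n + 1)).castSucc)
    (hne (by simp [Fin.ext_iff])) (hne (by simp [Fin.ext_iff])) (hne (by simp [Fin.ext_iff]))
  rw [Fin.sum_univ_succ (n := n + 1), Fin.sum_univ_succ (n := n + 2),
    Fin.sum_univ_castSucc (n := n + 1)]
  simp only [Fin.succ_sub_one, Fin.zero_sub_one]
  simp only [Fin.castSucc_zero, Fin.succ_castSucc, Fin.succ_last]
  linarith

theorem sum_le_sum_cycle_of_active {S : ι → ℝ}
    (hpair : ∀ p q, cell p ≠ cell q → S p ≤ g p q + g q p)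
    (htri : ∀ a b a', cell a ≠ cell b → cell b ≠ cell a' → cell a ≠ cell a' →
      g a a' ≤ g a b + g b a')
    (hactive : ∀ (n : ℕ) (u : Fin (n + 2) → ι), Function.Injective (cell ∘ u) →
      (∀ j, S (u j) ≠ 0) → ∑ j, S (u j) ≤ ∑ j, g (u j) (u (j - 1)))
    (n : ℕ) (u : Fin (n + 2) → ι) (hu : Function.Injective (cell ∘ u)) :
    ∑ j, S (u j) ≤ ∑ j, g (u j) (u (j - 1)) := by
  induction n with
  | zero =>
    by_cases hall : ∀ j, S (u j) ≠ 0
    · exact hactive 0 u hu hall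
    obtain ⟨b, hb⟩ := not_forall_not.mp hall
    have h01 : cell (u 0) ≠ cell (u 1) := fun e => zero_ne_one (hu e)
    have := hpair _ _ h01
    have := hpair _ _ h01.symm
    rw [Fin.sum_univ_two, Fin.sum_univ_two, Fin.zero_sub_one, sub_self,
      show Fin.last 1 = 1 from rfl]
    fin_cases b <;> simp only [Fin.zero_eta, Fin.mk_one] at hb <;> linarith
  | succ n ih =>
    by_cases hall : ∀ j, S (u j) ≠ 0
    · exact hactive _ u hu hall
    obtain ⟨b, hb⟩ := not_forall_not.mp hall
    -- rotate the cycle so that the inactive position `b` comes last, then drop it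
    set v : Fin (n + 3) → ι := fun j => u (j + (b + 1)) with hv
    have hvlast : S (v (Fin.last _)) = 0 := by
      simp only [hv, add_comm b, ← add_assoc, Fin.last_add_one, zero_add, hb]
    have hvinj : Function.Injective (cell ∘ v) := hu.comp (add_left_injective _)
    calc ∑ j, S (u j) = ∑ j, S (v j) := (Equiv.sum_comp (Equiv.addRight (b + 1)) (S ∘ u)).symm
      _ = ∑ i : Fin (n + 2), S (v i.castSucc) := by
        rw [Fin.sum_univ_castSucc, hvlast, add_zero]
      _ ≤ ∑ i : Fin (n + 2), g (v i.castSucc) (v (i - 1).castSucc) :=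
        ih (fun i => v i.castSucc) (hvinj.comp (Fin.castSucc_injective _))
      _ ≤ ∑ j, g (v j) (v (j - 1)) := sum_cycle_castSucc_le htri v hvinj
      _ = ∑ j, g (u j) (u (j - 1)) := Fintype.sum_equiv (Equiv.addRight (b + 1)) _ _ fun j => by
        simp only [hv, Equiv.coe_addRight, sub_add_eq_add_sub]

end CyclicSum

section Potential

variable {ι : Type*} (w : ι → ι → ℝ)

def pathWeight (exit : ι → ℝ) : List ι → ℝ
  | [] => 0
  | [a] => exit a
  | a :: b :: t => w a b + pathWeight exit (b :: t)

variable {w}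

lemma pathWeight_append_cons (exit : ι → ℝ) (q : List ι) (j : ι) (q' : List ι) :
    pathWeight w exit (q ++ j :: q') = pathWeight w (w · j) q + pathWeight w exit (j :: q') := by
  induction q with
  | nil => simp [pathWeight]
  | cons a t ih =>
    cases t with
    | nil => simp [pathWeight]
    | cons b t => simp only [List.cons_append, pathWeight] at ih ⊢; rw [ih]; ring

lemma pathWeight_cons_eq_sum (exit : ι → ℝ) (a : ι) (t : List ι) :
    pathWeight w exit (a :: t) =
      ∑ i : Fin t.length, w (a :: t)[i.castSucc] (a :: t)[i.succ] + exit (a :: t)[t.length] := by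
  induction t generalizing a with
  | nil => simp [pathWeight]
  | cons b t ih =>
    rw [pathWeight, ih]
    simp only [List.length_cons, Fin.sum_univ_succ]
    simp [add_assoc]

lemma pathWeight_cycle_eq_sum (a b : ι) (t : List ι) :
    pathWeight w (w · a) (a :: b :: t) =
      ∑ i : Fin (t.length + 2), w (a :: b :: t)[i] (a :: b :: t)[i + 1] := by
  rw [pathWeight_cons_eq_sum, Fin.sum_univ_castSucc]
  simp only [Fin.coeSucc_eq_succ, Fin.last_add_one]
  rfl

lemma pathWeight_cycle_nonneg
    (hcycle : ∀ (n : ℕ) (c : Fin (n + 2) → ι), Function.Injective c →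
      0 ≤ ∑ i, w (c i) (c (i + 1)))
    {a : ι} {t : List ι} (ht : t ≠ []) (hnd : (a :: t).Nodup) :
    0 ≤ pathWeight w (w · a) (a :: t) := by
  obtain ⟨b, t, rfl⟩ := List.exists_cons_of_ne_nil ht
  rw [pathWeight_cycle_eq_sum]
  exact hcycle _ _ fun i j hij => Fin.ext ((hnd.getElem_inj_iff).mp hij)

lemma pathWeight_nonneg {cap : ι → ℝ} (hcap : ∀ a, 0 ≤ cap a)
    (hw : ∀ a b, a ≠ b → w a b ≤ cap a)
    (hcycle : ∀ (n : ℕ) (c : Fin (n + 2) → ι), Function.Injective c →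
      0 ≤ ∑ i, w (c i) (c (i + 1)))
    {q : List ι} (hnd : q.Nodup) : 0 ≤ pathWeight w cap q := by
  rcases q with _ | ⟨a, t⟩
  · exact le_rfl
  rcases List.eq_nil_or_concat t with rfl | ⟨t', z, rfl⟩
  · exact hcap a
  have hza : z ≠ a := by
    rintro rfl
    exact (List.nodup_cons.mp hnd).1 (by simp)
  have hcyc := pathWeight_cycle_nonneg hcycle (by simp) hnd
  rw [List.concat_eq_append, ← List.cons_append, pathWeight_append_cons] at hcyc ⊢
  simp only [pathWeight] at hcyc ⊢
  linarith [hw z a hza]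

variable (w) in
noncomputable def potential (cap : ι → ℝ) (j : ι) : ℝ :=
  ⨅ t : {t : List ι // (j :: t).Nodup}, pathWeight w cap (j :: t.1)

theorem exists_potential {cap : ι → ℝ} (hcap : ∀ a, 0 ≤ cap a)
    (hw : ∀ a b, a ≠ b → w a b ≤ cap a)
    (hcycle : ∀ (n : ℕ) (c : Fin (n + 2) → ι), Function.Injective c →
      0 ≤ ∑ i, w (c i) (c (i + 1))) :
    ∃ x : ι → ℝ, (∀ j, 0 ≤ x j) ∧ (∀ j, x j ≤ cap j) ∧ ∀ j k, j ≠ k → x j ≤ x k + w j k := by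
  have hne (j : ι) : Nonempty {t : List ι // (j :: t).Nodup} := ⟨⟨[], List.nodup_singleton j⟩⟩
  have hle {j : ι} {t : List ι} (hnd : (j :: t).Nodup) :
      potential w cap j ≤ pathWeight w cap (j :: t) := by
    refine ciInf_le ⟨0, ?_⟩ (⟨t, hnd⟩ : {t : List ι // (j :: t).Nodup})
    rintro _ ⟨⟨t, ht⟩, rfl⟩
    exact pathWeight_nonneg hcap hw hcycle ht
  refine ⟨potential w cap, fun j => le_ciInf fun t => pathWeight_nonneg hcap hw hcycle t.2,
    fun j => hle (List.nodup_singleton j), fun j k hjk => ?_⟩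
  rw [← sub_le_iff_le_add]
  refine le_ciInf fun ⟨t, hnd⟩ => ?_
  rw [sub_le_iff_le_add']
  by_cases hjt : j ∈ k :: t
  · -- cut the path at `j`: the part before `j` closes a cycle through `j`
    obtain ⟨_ | ⟨k', q⟩, q', hsplit⟩ := List.append_of_mem hjt
    · exact absurd (List.cons.inj hsplit).1.symm hjk
    rw [List.cons_append, List.cons_eq_cons] at hsplit
    obtain ⟨rfl, rfl⟩ := hsplit
    rw [← List.cons_append] at hnd ⊢
    obtain ⟨hnd₁, hnd₂, hdisj⟩ := List.nodup_append.mp hnd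
    have hcyc := pathWeight_cycle_nonneg hcycle (List.cons_ne_nil k q)
      (List.nodup_cons.mpr ⟨fun hj => hdisj j hj j (by simp) rfl, hnd₁⟩)
    rw [pathWeight_append_cons]
    have := hle hnd₂
    simp only [pathWeight] at hcyc
    linarith
  · calc potential w cap j ≤ pathWeight w cap (j :: k :: t) := hle (List.nodup_cons.mpr ⟨hjt, hnd⟩)
      _ = w j k + pathWeight w cap (k :: t) := rfl

end Potential

section InnerMax

variable {K : ℕ} {L : Fin K → ℕ} {α : (k : Fin K) → Fin (L k) → Fin K → ℝ}
  {π : (k : Fin K) → Equiv.Perm (Fin (L k))} {S : Set (User L)}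
  {r : (k : Fin K) → Fin (L k) → ℝ} {k : Fin K} {l : Fin (L k)}

lemma innerMax_bddAbove :
    BddAbove (insert (0 : ℝ)
    ({x : ℝ | ∃ l' : Fin (L k), l' < l ∧ (⟨k, π k l'⟩ : User L) ∈ S ∧
        x = r k (π k l') + α k (π k l') k} ∪
     {x : ℝ | ∃ (j : Fin K) (lj : Fin (L j)), j ≠ k ∧ (⟨j, lj⟩ : User L) ∈ S ∧
        x = r j lj + α j lj k})) := by
  refine (Set.Finite.union ?_ ?_).insert 0 |>.bddAbove
  · refine (Set.finite_range fun l' : Fin (L k) => r k (π k l') + α k (π k l') k).subset ?_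
    rintro x ⟨l', _, _, rfl⟩
    exact ⟨l', rfl⟩
  · refine (Set.finite_range fun p : User L => r p.1 p.2 + α p.1 p.2 k).subset ?_
    rintro x ⟨j, lj, _, _, rfl⟩
    exact ⟨⟨j, lj⟩, rfl⟩

lemma innerMax_nonneg : 0 ≤ innerMax L α π S r k l :=
  le_csSup innerMax_bddAbove (Set.mem_insert _ _)

lemma le_innerMax_cell {l' : Fin (L k)} (h : l' < l) (hS : (⟨k, π k l'⟩ : User L) ∈ S) :
    r k (π k l') + α k (π k l') k ≤ innerMax L α π S r k l :=
  le_csSup innerMax_bddAbove (Set.mem_insert_of_mem _ (Or.inl ⟨l', h, hS, rfl⟩))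

lemma le_innerMax_cross {j : Fin K} (hj : j ≠ k) (lj : Fin (L j))
    (hS : (⟨j, lj⟩ : User L) ∈ S) :
    r j lj + α j lj k ≤ innerMax L α π S r k l :=
  le_csSup innerMax_bddAbove (Set.mem_insert_of_mem _ (Or.inr ⟨j, lj, hj, hS, rfl⟩))

lemma innerMax_le {B : ℝ} (h0 : 0 ≤ B)
    (hcell : ∀ l' < l, (⟨k, π k l'⟩ : User L) ∈ S → r k (π k l') + α k (π k l') k ≤ B)
    (hcross : ∀ j ≠ k, ∀ lj : Fin (L j), (⟨j, lj⟩ : User L) ∈ S → r j lj + α j lj k ≤ B) :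
    innerMax L α π S r k l ≤ B := by
  refine csSup_le (Set.insert_nonempty _ _) ?_
  rintro x (rfl | ⟨l', hl', hS, rfl⟩ | ⟨j, lj, hj, hS, rfl⟩)
  exacts [h0, hcell l' hl' hS, hcross j hj lj hS]

end InnerMax

def TINAchievableWith {K : ℕ} (L : Fin K → ℕ) (α : (k : Fin K) → Fin (L k) → Fin K → ℝ)
    (π : (k : Fin K) → Equiv.Perm (Fin (L k))) (r d : (k : Fin K) → Fin (L k) → ℝ) : Prop :=
  ∀ k l, d k (π k l) ≤ max 0 (r k (π k l) + α k (π k l) k - innerMax L α π Set.univ r k l)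

section Achievable

variable {K : ℕ} {L : Fin K → ℕ} {α : (k : Fin K) → Fin (L k) → Fin K → ℝ}
  {π : (k : Fin K) → Equiv.Perm (Fin (L k))} {r d : (k : Fin K) → Fin (L k) → ℝ}

lemma TINAchievableWith.add_innerMax_le_of_pos (hdr : TINAchievableWith L α π r d)
    {k : Fin K} {l : Fin (L k)} (hpos : 0 < d k (π k l)) :
    d k (π k l) + innerMax L α π Set.univ r k l ≤ r k (π k l) + α k (π k l) k := by
  rcases le_max_iff.mp (hdr k l) with h | h <;> linarith

/-- Successive decoding telescopes: `t` is the active user decoded last, `p` the position of the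
one decoded first. -/
lemma TINAchievableWith.exists_sum_add_innerMax_le (hdr : TINAchievableWith L α π r d)
    (k : Fin K) (A : Finset (Fin (L k))) (hA : A.Nonempty) (hpos : ∀ s ∈ A, 0 < d k s) :
    ∃ t ∈ A, ∃ p, ∑ s ∈ A, d k s + innerMax L α π Set.univ r k p ≤ r k t + α k t k := by
  induction A using Finset.induction_on_max_value (π k).symm with
  | empty => exact absurd hA Finset.not_nonempty_empty
  | insert a A haA hmax ih =>
    have ha := hdr.add_innerMax_le_of_pos (l := (π k).symm a)
      (by simpa using hpos a (mem_insert_self a A))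
    simp only [Equiv.apply_symm_apply] at ha
    rw [sum_insert haA]
    rcases A.eq_empty_or_nonempty with rfl | hA'
    · exact ⟨a, mem_insert_self a _, (π k).symm a, by simpa using ha⟩
    obtain ⟨t, htA, p, ht⟩ := ih hA' fun s hs => hpos s (mem_insert_of_mem hs)
    have hlt : (π k).symm t < (π k).symm a :=
      (hmax t htA).lt_of_ne fun e => haA (by simpa [(π k).symm.injective e] using htA)
    have hcell := le_innerMax_cell (α := α) (π := π) (r := r) hlt (Set.mem_univ _)
    simp only [Equiv.apply_symm_apply] at hcell
    exact ⟨a, mem_insert_self a A, p, by linarith⟩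

lemma TINAchievableWith.sum_Iic_eq_zero_or_exists (hdr : TINAchievableWith L α π r d)
    (hd0 : ∀ k l, 0 ≤ d k l) (k : Fin K) (l : Fin (L k)) :
    ∑ s ∈ Iic l, d k s = 0 ∨ ∃ t ≤ l, ∃ p,
      ∑ s ∈ Iic l, d k s + innerMax L α π Set.univ r k p ≤ r k t + α k t k := by
  rw [← sum_filter_ne_zero]
  rcases ((Iic l).filter fun s => d k s ≠ 0).eq_empty_or_nonempty with hA | hA
  · exact Or.inl (by rw [hA, sum_empty])
  obtain ⟨t, ht, p, hp⟩ := hdr.exists_sum_add_innerMax_le k _ hA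
    fun s hs => (hd0 k s).lt_of_ne (mem_filter.mp hs).2.symm
  exact Or.inr ⟨t, mem_Iic.mp (mem_filter.mp ht).1, p, hp⟩

lemma TINAchievableWith.sum_Iic_le (hdr : TINAchievableWith L α π r d)
    (hα : ∀ (k : Fin K) (l : Fin (L k)) (i : Fin K), 0 ≤ α k l i)
    (hmono : ∀ k : Fin K, Monotone (fun l : Fin (L k) => α k l k))
    (hd0 : ∀ k l, 0 ≤ d k l) (hr : ∀ k l, r k l ≤ 0) (k : Fin K) (l : Fin (L k)) : ∑ s ∈ Iic l, d k s ≤ α k l k := by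
  rcases hdr.sum_Iic_eq_zero_or_exists hd0 k l with h | ⟨t, htl, p, h⟩
  · rw [h]; exact hα k l k
  · linarith [hr k t, hmono k htl, innerMax_nonneg (L := L) (α := α) (π := π) (S := Set.univ)
      (r := r) (l := p)]

lemma TINAchievableWith.sum_cycle_le_of_active (hdr : TINAchievableWith L α π r d)
    (hC1 : ∀ (i j : Fin K), j ≠ i → ∀ (l' l : Fin (L i)), l' < l →
      α i l' i + α i l j - α i l' j ≤ α i l i)
    (hd0 : ∀ k l, 0 ≤ d k l)
    {n : ℕ} (u : Fin (n + 2) → User L) (hu : Function.Injective (Sigma.fst ∘ u))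
    (hact : ∀ j, ∑ s ∈ Iic (u j).2, d (u j).1 s ≠ 0) :
    ∑ j, ∑ s ∈ Iic (u j).2, d (u j).1 s ≤
      ∑ j, (α (u j).1 (u j).2 (u j).1 - α (u j).1 (u j).2 (u (j - 1)).1) := by
  choose t htl p hp using fun j =>
    (hdr.sum_Iic_eq_zero_or_exists hd0 (u j).1 (u j).2).resolve_left (hact j)
  set R : Fin (n + 2) → ℝ := fun j => r (u j).1 (t j) + α (u j).1 (t j) (u j).1 with hR
  set F : Fin (n + 2) → ℝ := fun j => α (u j).1 (t j) (u j).1 - α (u j).1 (t j) (u (j - 1)).1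
    with hF
  have hnext (j : Fin (n + 2)) : (u (j + 1)).1 ≠ (u j).1 := fun e => by simpa using hu e
  have hprev (j : Fin (n + 2)) : (u (j - 1)).1 ≠ (u j).1 := fun e => by simpa using hu e
  -- receiver `j` sees the interference of the top active user of cell `j + 1`
  have hstep (j : Fin (n + 2)) : ∑ s ∈ Iic (u j).2, d (u j).1 s ≤ R j - R (j + 1) + F (j + 1) := by
    have := le_innerMax_cross (α := α) (π := π) (r := r) (l := p j) (hnext j) (t (j + 1))
      (Set.mem_univ _)
    simp only [hR, hF, add_sub_cancel_right]
    linarith [hp j]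
  have hF_le (j : Fin (n + 2)) :
      F j ≤ α (u j).1 (u j).2 (u j).1 - α (u j).1 (u j).2 (u (j - 1)).1 := by
    rcases (htl j).lt_or_eq with hlt | heq
    · linarith [hC1 _ _ (hprev j) _ _ hlt]
    · simp only [hF, heq, le_refl]
  have hRrot : ∑ j, R (j + 1) = ∑ j, R j := Equiv.sum_comp (Equiv.addRight 1) R
  have hFrot : ∑ j, F (j + 1) = ∑ j, F j := Equiv.sum_comp (Equiv.addRight 1) F
  calc _ ≤ ∑ j, (R j - R (j + 1) + F (j + 1)) := sum_le_sum fun j _ => hstep j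
    _ = ∑ j, F j := by rw [sum_add_distrib, sum_sub_distrib, hRrot, hFrot, sub_self, zero_add]
    _ ≤ _ := sum_le_sum fun j _ => hF_le j

theorem cyclicSystem_of_starTIN (hα : ∀ (k : Fin K) (l : Fin (L k)) (i : Fin K), 0 ≤ α k l i)
    (hmono : ∀ k : Fin K, Monotone (fun l : Fin (L k) => α k l k))
    (hC1 : ∀ (i j : Fin K), j ≠ i → ∀ (l' l : Fin (L i)), l' < l →
      α i l' i + α i l j - α i l' j ≤ α i l i)
    (hC2 : ∀ (i : Fin K) (li : Fin (L i)) (j : Fin K), j ≠ i →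
      ∀ (k : Fin K), k ≠ i → ∀ (lk : Fin (L k)),
      α i li j + α k lk i - (if k = j then 0 else α k lk j) ≤ α i li i)
    (h : starTIN L α π d) : cyclicSystem L α (idOrder L) d := by
  obtain ⟨hd0, r, hr, hdr : TINAchievableWith L α π r d⟩ := h
  have hmac := hdr.sum_Iic_le hα hmono hd0 hr
  refine ⟨fun k l => by simpa [idOrder] using hmac k l, fun m hm _ c hc lsel => ?_⟩
  obtain ⟨n, rfl⟩ : ∃ n, m = n + 2 := ⟨m - 2, by omega⟩
  simp only [idOrder, Equiv.refl_apply, prevIdx_eq_sub_one]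
  refine sum_le_sum_cycle_of_active (cell := Sigma.fst)
    (S := fun p : User L => ∑ s ∈ Iic p.2, d p.1 s)
    (g := fun p q => α p.1 p.2 p.1 - α p.1 p.2 q.1) ?_ ?_
    (fun n u hu hact => hdr.sum_cycle_le_of_active hC1 hd0 u hu hact) n
    (fun j => ⟨c j, lsel j⟩) hc
  · intro p q hpq
    have := hC2 q.1 q.2 p.1 hpq p.1 hpq p.2
    rw [if_pos rfl] at this
    linarith [hmac p.1 p.2]
  · intro a b a' hab hba' haa'
    have := hC2 b.1 b.2 a'.1 hba'.symm a.1 hab a.2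
    rw [if_neg haa'] at this
    linarith

end Achievable

section Polyhedral

variable {K : ℕ} {L : Fin K → ℕ} {α : (k : Fin K) → Fin (L k) → Fin K → ℝ}
  {d : (k : Fin K) → Fin (L k) → ℝ}

lemma cyclicSystem.sum_le_sum_next (hcyc : cyclicSystem L α (idOrder L) d) {n : ℕ}
    (c : Fin (n + 2) → Fin K) (hc : Function.Injective c)
    (lsel : (j : Fin (n + 2)) → Fin (L (c j))) :
    ∑ j, ∑ s ∈ Iic (lsel j), d (c j) s ≤
      ∑ j, (α (c j) (lsel j) (c j) - α (c j) (lsel j) (c (j + 1))) := by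
  have h := hcyc.2 (n + 2) le_add_self (by simpa using Fintype.card_le_of_injective c hc)
    (c ∘ Neg.neg) (hc.comp neg_injective) fun j => lsel (-j)
  have hneg (j : Fin (n + 2)) : -(j - 1) = -j + 1 := by abel
  simp only [idOrder, Equiv.refl_apply, prevIdx_eq_sub_one, Function.comp_apply, hneg] at h
  calc _ = ∑ j, ∑ s ∈ Iic (lsel (-j)), d (c (-j)) s := (Equiv.sum_comp (Equiv.neg _) _).symm
    _ ≤ _ := h
    _ = _ := Equiv.sum_comp (Equiv.neg _)
      fun j => α (c j) (lsel j) (c j) - α (c j) (lsel j) (c (j + 1))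

theorem polyTIN_of_cyclicSystem (hL : ∀ k, 1 ≤ L k)
    (hα : ∀ (k : Fin K) (l : Fin (L k)) (i : Fin K), 0 ≤ α k l i)
    (hd0 : ∀ k l, 0 ≤ d k l) (hcyc : cyclicSystem L α (idOrder L) d) :
    polyTIN L α (idOrder L) Set.univ d := by
  have hne (k : Fin K) : (univ : Finset (Fin (L k))).Nonempty := ⟨⟨0, hL k⟩, mem_univ _⟩
  set D : (k : Fin K) → Fin (L k) → ℝ := fun k l => ∑ s ∈ Iic l, d k s with hD
  have hmac (k : Fin K) (l : Fin (L k)) : D k l ≤ α k l k := by simpa [idOrder] using hcyc.1 k l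
  set cap : Fin K → ℝ := fun k => univ.inf' (hne k) fun l => α k l k - D k l with hcap
  set w : Fin K → Fin K → ℝ := fun j k => univ.inf' (hne j) fun l => α j l j - α j l k - D j l
    with hw
  have hcycle (n : ℕ) (c : Fin (n + 2) → Fin K) (hc : Function.Injective c) :
      0 ≤ ∑ i, w (c i) (c (i + 1)) := by
    choose lsel hlsel using fun i => exists_mem_eq_inf' (hne (c i))
      fun l => α (c i) l (c i) - α (c i) l (c (i + 1)) - D (c i) l
    have h : ∑ i, D (c i) (lsel i) ≤
        ∑ i, (α (c i) (lsel i) (c i) - α (c i) (lsel i) (c (i + 1))) :=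
      hcyc.sum_le_sum_next c hc lsel
    rw [sum_congr rfl fun i _ => (hlsel i).2, sum_sub_distrib]
    linarith
  obtain ⟨x, hx0, hxcap, hxw⟩ := exists_potential (w := w) (cap := cap)
    (fun k => le_inf' _ _ fun l _ => by linarith [hmac k l])
    (fun a b _ => le_inf' _ _ fun l _ => (inf'_le _ (mem_univ l)).trans (by linarith [hα a l b]))
    hcycle
  refine ⟨hd0, fun k l h => absurd (Set.mem_univ _) h, fun k l => x k + D k l - α k l k,
    fun k l _ => ?_, fun k l _ => ?_⟩
  · linarith [hxcap k, inf'_le (fun l => α k l k - D k l) (mem_univ l)]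
  simp only [idOrder, Equiv.refl_apply]
  have hsplit : D k l = ∑ s ∈ Iio l, d k s + d k l := (sum_Iio_add_eq_sum_Iic l).symm
  have hIio : 0 ≤ ∑ s ∈ Iio l, d k s := sum_nonneg fun s _ => hd0 k s
  have hmax : innerMax L α (idOrder L) Set.univ (fun k l => x k + D k l - α k l k) k l ≤
      x k + ∑ s ∈ Iio l, d k s := by
    refine innerMax_le (by linarith [hx0 k]) (fun l' hl' _ => ?_) fun j hj lj _ => ?_
    · simp only [idOrder, Equiv.refl_apply, sub_add_cancel, add_le_add_iff_left]
      exact sum_le_sum_of_subset_of_nonneg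
        (fun s hs => mem_Iio.mpr ((mem_Iic.mp hs).trans_lt hl')) fun s _ _ => hd0 k s
    · linarith [hxw j k hj, inf'_le (fun l => α j l j - α j l k - D j l) (mem_univ lj)]
  linarith

end Polyhedral

lemma convex_cyclicSystem {K : ℕ} {L : Fin K → ℕ} (α : (k : Fin K) → Fin (L k) → Fin K → ℝ)
    (π : (k : Fin K) → Equiv.Perm (Fin (L k))) :
    Convex ℝ {d : (k : Fin K) → Fin (L k) → ℝ |
      (∀ (k : Fin K) (l : Fin (L k)), 0 ≤ d k l) ∧ cyclicSystem L α π d} := by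
  simp only [cyclicSystem, Set.ofPred_and, Set.ofPred_forall]
  refine (convex_iInter fun k => convex_iInter fun l => ?_).inter
    ((convex_iInter fun k => convex_iInter fun l => ?_).inter
      (convex_iInter fun m => convex_iInter fun _ => convex_iInter fun _ => convex_iInter fun c =>
        convex_iInter fun _ => convex_iInter fun lsel => ?_))
  · exact convex_halfSpace_ge ⟨fun _ _ => rfl, fun _ _ => rfl⟩ _
  · exact convex_halfSpace_le ⟨fun _ _ => by simp [sum_add_distrib], fun _ _ => by simp [mul_sum]⟩ _
  · exact convex_halfSpace_le ⟨fun _ _ => by simp [sum_add_distrib], fun _ _ => by simp [mul_sum]⟩ _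

theorem starTIN_polyhedron_of_convexityConditions_general {K : ℕ}
    (L : Fin K → ℕ) (hL : ∀ k, 1 ≤ L k)
    (α : (k : Fin K) → Fin (L k) → Fin K → ℝ)
    (hα : ∀ (k : Fin K) (l : Fin (L k)) (i : Fin K), 0 ≤ α k l i)
    (hmono : ∀ k : Fin K, Monotone (fun l : Fin (L k) => α k l k))
    (hC1 : ∀ (i j : Fin K), j ≠ i → ∀ (l' l : Fin (L i)), l' < l →
      α i l' i + α i l j - α i l' j ≤ α i l i)
    (hC2 : ∀ (i : Fin K) (li : Fin (L i)) (j : Fin K), j ≠ i →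
      ∀ (k : Fin K), k ≠ i → ∀ (lk : Fin (L k)),
      α i li j + α k lk i - (if k = j then 0 else α k lk j) ≤ α i li i) :
    ({d : (k : Fin K) → Fin (L k) → ℝ |
        ∃ π : (k : Fin K) → Equiv.Perm (Fin (L k)), starTIN L α π d} =
      {d : (k : Fin K) → Fin (L k) → ℝ | polyTIN L α (idOrder L) Set.univ d}) ∧
    ({d : (k : Fin K) → Fin (L k) → ℝ |
        ∃ π : (k : Fin K) → Equiv.Perm (Fin (L k)), starTIN L α π d} =
      {d : (k : Fin K) → Fin (L k) → ℝ |
        (∀ (k : Fin K) (l : Fin (L k)), 0 ≤ d k l) ∧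
          cyclicSystem L α (idOrder L) d}) ∧
    Convex ℝ {d : (k : Fin K) → Fin (L k) → ℝ |
        ∃ π : (k : Fin K) → Equiv.Perm (Fin (L k)), starTIN L α π d} := by
  have hAC : {d : (k : Fin K) → Fin (L k) → ℝ | ∃ π, starTIN L α π d} ⊆
      {d | (∀ k l, 0 ≤ d k l) ∧ cyclicSystem L α (idOrder L) d} :=
    fun d ⟨_, hd⟩ => ⟨hd.1, cyclicSystem_of_starTIN hα hmono hC1 hC2 hd⟩
  have hCB : {d | (∀ k l, 0 ≤ d k l) ∧ cyclicSystem L α (idOrder L) d} ⊆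
      {d | polyTIN L α (idOrder L) Set.univ d} :=
    fun d ⟨hd0, hcyc⟩ => polyTIN_of_cyclicSystem hL hα hd0 hcyc
  have hBA : {d | polyTIN L α (idOrder L) Set.univ d} ⊆
      {d : (k : Fin K) → Fin (L k) → ℝ | ∃ π, starTIN L α π d} :=
    fun d ⟨hd0, _, r, hr, hdr⟩ => ⟨idOrder L, hd0, r, fun k l => hr k l (Set.mem_univ _),
      fun k l => (hdr k l (Set.mem_univ _)).trans (le_max_right _ _)⟩
  have hcyclic := hAC.antisymm (hCB.trans hBA)
  exact ⟨(hAC.trans hCB).antisymm hBA, hcyclic, hcyclic ▸ convex_cyclicSystem α (idOrder L)⟩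

/-- **Theorem 3 (TIN-convexity).**
Under the TIN-convexity conditions (C1) and (C2), the general TIN-achievable GDoF region
`P* = ∪_π P*_π` is the polyhedron `P_id(𝒦)`; in particular it equals the set of all
nonnegative tuples satisfying the TIN cyclic system for the identity decoding order, and
it is convex. -/
theorem starTIN_polyhedron_of_convexityConditions {K : ℕ} (hK : 1 ≤ K)
    (L : Fin K → ℕ) (hL : ∀ k, 1 ≤ L k)
    (α : (k : Fin K) → Fin (L k) → Fin K → ℝ)
    (hα : ∀ (k : Fin K) (l : Fin (L k)) (i : Fin K), 0 ≤ α k l i)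
    (hmono : ∀ k : Fin K, Monotone (fun l : Fin (L k) => α k l k))
    (hC1 : ∀ (i j : Fin K), j ≠ i → ∀ (l' l : Fin (L i)), l' < l →
      α i l' i + α i l j - α i l' j ≤ α i l i)
    (hC2 : ∀ (i : Fin K) (li : Fin (L i)) (j : Fin K), j ≠ i →
      ∀ (k : Fin K), k ≠ i → ∀ (lk : Fin (L k)),
      α i li j + α k lk i - (if k = j then 0 else α k lk j) ≤ α i li i) :
    ({d : (k : Fin K) → Fin (L k) → ℝ |
        ∃ π : (k : Fin K) → Equiv.Perm (Fin (L k)), starTIN L α π d} =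
      {d : (k : Fin K) → Fin (L k) → ℝ | polyTIN L α (idOrder L) Set.univ d}) ∧
    ({d : (k : Fin K) → Fin (L k) → ℝ |
        ∃ π : (k : Fin K) → Equiv.Perm (Fin (L k)), starTIN L α π d} =
      {d : (k : Fin K) → Fin (L k) → ℝ |
        (∀ (k : Fin K) (l : Fin (L k)), 0 ≤ d k l) ∧
          cyclicSystem L α (idOrder L) d}) ∧
    Convex ℝ {d : (k : Fin K) → Fin (L k) → ℝ |
        ∃ π : (k : Fin K) → Equiv.Perm (Fin (L k)), starTIN L α π d} :=
  starTIN_polyhedron_of_convexityConditions_general L hL α hα hmono hC1 hC2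
end

section
/- Assume the TIN-convexity condition (C2). For every M ⊆ {1,…,K} and every k ∈ {1,…,K}: P_id(∪_{i∈M} K_i) ⊆ P_id(∪_{i∈M∪{k}} K_i); consequently, P_id(∪_{i∈M} K_i) ⊆ P_id(𝒦) for every M ⊆ {1,…,K}. -/
open Finset

/-! Switching on a cell `k ∉ M` costs nothing: keep the powers of the active cells and give each
user of cell `k` the power at which it is received exactly at the interference level of receiver
`k`, so that its rate `0` is feasible. Condition (C2) bounds the interference this new cell causes
at an active receiver by the interference already present there, so every old constraint survives.
Adding the missing cells one at a time gives the inclusion into `P_id(𝒦)`. -/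

/-- The TIN-convexity condition (C2). -/
def TINConvex {K : ℕ} {L : Fin K → ℕ} (α : (k : Fin K) → Fin (L k) → Fin K → ℝ) :
    Prop :=
  ∀ (i : Fin K) (li : Fin (L i)) (j : Fin K), j ≠ i →
    ∀ (k : Fin K), k ≠ i → ∀ (lk : Fin (L k)),
    α i li j + α k lk i - (if k = j then 0 else α k lk j) ≤ α i li i

lemma sSup_insert_zero_le_iff {s : Set ℝ} (hs : s.Finite) {c : ℝ} :
    sSup (insert 0 s) ≤ c ↔ 0 ≤ c ∧ ∀ x ∈ s, x ≤ c := by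
  rw [csSup_le_iff (hs.insert 0).bddAbove (Set.insert_nonempty 0 s), Set.forall_mem_insert]

section InnerMax

variable {K : ℕ} {L : Fin K → ℕ} (α : (k : Fin K) → Fin (L k) → Fin K → ℝ)
  (π : (k : Fin K) → Equiv.Perm (Fin (L k))) (S : Set (User L))
  (r : (k : Fin K) → Fin (L k) → ℝ)

theorem innerMax_le_iff {k : Fin K} {l : Fin (L k)} {c : ℝ} :
    innerMax L α π S r k l ≤ c ↔ 0 ≤ c ∧
      (∀ l' < l, (⟨k, π k l'⟩ : User L) ∈ S → r k (π k l') + α k (π k l') k ≤ c) ∧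
      (∀ (j : Fin K) (lj : Fin (L j)), j ≠ k → (⟨j, lj⟩ : User L) ∈ S →
        r j lj + α j lj k ≤ c) := by
  have hfin : ({x : ℝ | ∃ l' : Fin (L k), l' < l ∧ (⟨k, π k l'⟩ : User L) ∈ S ∧
        x = r k (π k l') + α k (π k l') k} ∪
      {x : ℝ | ∃ (j : Fin K) (lj : Fin (L j)), j ≠ k ∧ (⟨j, lj⟩ : User L) ∈ S ∧
        x = r j lj + α j lj k}).Finite := by
    refine .union ((Set.finite_range fun l' => r k (π k l') + α k (π k l') k).subset ?_)
      ((Set.finite_range fun u : User L => r u.1 u.2 + α u.1 u.2 k).subset ?_)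
    · rintro x ⟨l', -, -, rfl⟩
      exact ⟨l', rfl⟩
    · rintro x ⟨j, lj, -, -, rfl⟩
      exact ⟨⟨j, lj⟩, rfl⟩
  rw [innerMax, sSup_insert_zero_le_iff hfin]
  refine and_congr_right fun _ => ⟨fun h => ⟨fun l' hl' hS => h _ (.inl ⟨l', hl', hS, rfl⟩),
    fun j lj hj hS => h _ (.inr ⟨j, lj, hj, hS, rfl⟩)⟩, ?_⟩
  rintro ⟨hsame, hcross⟩ x (⟨l', hl', hS, rfl⟩ | ⟨j, lj, hj, hS, rfl⟩)
  exacts [hsame l' hl' hS, hcross j lj hj hS]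

theorem innerMax_eq_of_forall_not_mem {k : Fin K} (hk : ∀ l, (⟨k, l⟩ : User L) ∉ S)
    (l l' : Fin (L k)) : innerMax L α π S r k l = innerMax L α π S r k l' := by
  simp [innerMax, hk]

end InnerMax

section SwitchOn

variable {K : ℕ} {L : Fin K → ℕ} (α : (k : Fin K) → Fin (L k) → Fin K → ℝ)
  (π : (k : Fin K) → Equiv.Perm (Fin (L k)))

noncomputable def switchOnPower (S : Set (User L)) (r : (k : Fin K) → Fin (L k) → ℝ)
    (k : Fin K) : (j : Fin K) → Fin (L j) → ℝ :=
  fun j m => if j = k then innerMax L α π S r j ((π j).symm m) - α j m j else r j m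

variable {α π} {S : Set (User L)} {r : (k : Fin K) → Fin (L k) → ℝ} {k : Fin K}

lemma switchOnPower_self (m : Fin (L k)) :
    switchOnPower α π S r k k m = innerMax L α π S r k ((π k).symm m) - α k m k :=
  if_pos rfl

lemma switchOnPower_of_ne {j : Fin K} (hj : j ≠ k) : switchOnPower α π S r k j = r j :=
  funext fun _ => if_neg hj

variable {M : Set (Fin K)}

lemma innerMax_le_iff_of_not_mem (hkM : k ∉ M) {l : Fin (L k)} {c : ℝ} :
    innerMax L α π {u | u.1 ∈ M} r k l ≤ c ↔
      0 ≤ c ∧ ∀ (j : Fin K) (lj : Fin (L j)), j ∈ M → r j lj + α j lj k ≤ c := by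
  rw [innerMax_le_iff]
  exact and_congr_right fun _ => ⟨fun h j lj hj => h.2 j lj (ne_of_mem_of_not_mem hj hkM) hj,
    fun h => ⟨fun _ _ hS => absurd hS hkM, fun j lj _ hj => h j lj hj⟩⟩

lemma switchOnPower_self_nonpos
    (hα : ∀ (k : Fin K) (l : Fin (L k)) (i : Fin K), 0 ≤ α k l i) (hC2 : TINConvex α)
    (hr : ∀ (j : Fin K) (lj : Fin (L j)), j ∈ M → r j lj ≤ 0) (hkM : k ∉ M)
    (m : Fin (L k)) :
    switchOnPower α π {u | u.1 ∈ M} r k k m ≤ 0 := by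
  rw [switchOnPower_self, sub_nonpos]
  refine (innerMax_le_iff_of_not_mem hkM).2 ⟨hα k m k, fun j lj hj => ?_⟩
  have hjk : j ≠ k := ne_of_mem_of_not_mem hj hkM
  have := hC2 k m j hjk j hjk lj
  rw [if_pos rfl] at this
  linarith [hα k m j, hr j lj hj]

lemma innerMax_switchOnPower_self_le (hkM : k ∉ M) (l : Fin (L k)) :
    innerMax L α π {u | u.1 ∈ insert k M} (switchOnPower α π {u | u.1 ∈ M} r k) k l ≤
      innerMax L α π {u | u.1 ∈ M} r k l := by
  obtain ⟨hI0, hIcross⟩ := (innerMax_le_iff_of_not_mem hkM).1 le_rfl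
  refine (innerMax_le_iff ..).2 ⟨hI0, fun l' _ _ => ?_, fun j lj hjk hj => ?_⟩
  · rw [switchOnPower_self, Equiv.symm_apply_apply,
      innerMax_eq_of_forall_not_mem _ _ _ _ (fun _ => hkM) l' l]
    linarith
  · rw [switchOnPower_of_ne hjk]
    exact hIcross j lj (hj.resolve_left hjk)

lemma innerMax_sub_add_le_innerMax
    (hα : ∀ (k : Fin K) (l : Fin (L k)) (i : Fin K), 0 ≤ α k l i) (hC2 : TINConvex α)
    (hr : ∀ (j : Fin K) (lj : Fin (L j)), j ∈ M → r j lj ≤ 0)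
    (hkM : k ∉ M) {j : Fin K} (hj : j ∈ M) (p m : Fin (L k)) (l : Fin (L j)) :
    innerMax L α π {u | u.1 ∈ M} r k p - α k m k + α k m j ≤
      innerMax L α π {u | u.1 ∈ M} r j l := by
  have hjk : j ≠ k := ne_of_mem_of_not_mem hj hkM
  obtain ⟨hI0, -, hIcross⟩ := (innerMax_le_iff (l := l) ..).1 le_rfl
  suffices innerMax L α π {u | u.1 ∈ M} r k p ≤
      innerMax L α π {u | u.1 ∈ M} r j l + α k m k - α k m j by linarith
  refine (innerMax_le_iff_of_not_mem hkM).2 ⟨?_, fun j' lj' hj' => ?_⟩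
  · have := hC2 k m j hjk j hjk l
    rw [if_pos rfl] at this
    linarith [hα j l k]
  · have hC2' := hC2 k m j hjk j' (ne_of_mem_of_not_mem hj' hkM) lj'
    have := hr j' lj' hj'
    by_cases hj'j : j' = j
    · rw [if_pos hj'j] at hC2'
      linarith
    · rw [if_neg hj'j] at hC2'
      linarith [hIcross j' lj' hj'j hj']

lemma innerMax_switchOnPower_le
    (hα : ∀ (k : Fin K) (l : Fin (L k)) (i : Fin K), 0 ≤ α k l i) (hC2 : TINConvex α)
    (hr : ∀ (j : Fin K) (lj : Fin (L j)), j ∈ M → r j lj ≤ 0)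
    (hkM : k ∉ M) {j : Fin K} (hj : j ∈ M) (l : Fin (L j)) :
    innerMax L α π {u | u.1 ∈ insert k M} (switchOnPower α π {u | u.1 ∈ M} r k) j l ≤
      innerMax L α π {u | u.1 ∈ M} r j l := by
  have hjk : j ≠ k := ne_of_mem_of_not_mem hj hkM
  obtain ⟨hI0, hIsame, hIcross⟩ := (innerMax_le_iff (l := l) ..).1 le_rfl
  refine (innerMax_le_iff ..).2 ⟨hI0, fun l' hl' hS => ?_, fun j' lj' hj'j hS => ?_⟩
  · rw [switchOnPower_of_ne hjk]
    exact hIsame l' hl' (hS.resolve_left hjk)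
  · by_cases hj'k : j' = k
    · subst hj'k
      rw [switchOnPower_self]
      linarith [innerMax_sub_add_le_innerMax (π := π) hα hC2 hr hkM hj ((π j').symm lj') lj' l]
    · rw [switchOnPower_of_ne hj'k]
      exact hIcross j' lj' hj'j (hS.resolve_left hj'k)

end SwitchOn

section Monotone

variable {K : ℕ} {L : Fin K → ℕ} {α : (k : Fin K) → Fin (L k) → Fin K → ℝ}
  {π : (k : Fin K) → Equiv.Perm (Fin (L k))}

theorem polyTIN_subset_insert_cell
    (hα : ∀ (k : Fin K) (l : Fin (L k)) (i : Fin K), 0 ≤ α k l i) (hC2 : TINConvex α)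
    (M : Set (Fin K)) (k : Fin K) :
    {d | polyTIN L α π {u : User L | u.1 ∈ M} d} ⊆
      {d | polyTIN L α π {u : User L | u.1 ∈ insert k M} d} := by
  intro d hd
  by_cases hkM : k ∈ M
  · rwa [Set.insert_eq_of_mem hkM]
  obtain ⟨hd0, hdz, r, hr0, hrc⟩ := hd
  refine ⟨hd0, fun j m h => hdz j m fun h' => h (.inr h'),
    switchOnPower α π {u | u.1 ∈ M} r k, fun j m hj => ?_, fun j l hj => ?_⟩
  · by_cases hjk : j = k
    · subst hjk
      exact switchOnPower_self_nonpos hα hC2 hr0 hkM m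
    · rw [switchOnPower_of_ne hjk]
      exact hr0 j m (hj.resolve_left hjk)
  · by_cases hjk : j = k
    · subst hjk
      rw [hdz _ _ hkM, switchOnPower_self, Equiv.symm_apply_apply]
      linarith [innerMax_switchOnPower_self_le (α := α) (π := π) (r := r) hkM l]
    · rw [switchOnPower_of_ne hjk]
      have hjM : j ∈ M := hj.resolve_left hjk
      linarith [hrc j l hjM,
        innerMax_switchOnPower_le (π := π) (M := M) hα hC2 hr0 hkM hjM l]

theorem polyTIN_subset_of_cells_subset
    (hα : ∀ (k : Fin K) (l : Fin (L k)) (i : Fin K), 0 ≤ α k l i) (hC2 : TINConvex α)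
    {M N : Set (Fin K)} (hMN : M ⊆ N) :
    {d | polyTIN L α π {u : User L | u.1 ∈ M} d} ⊆
      {d | polyTIN L α π {u : User L | u.1 ∈ N} d} := by
  have hunion : ∀ F : Finset (Fin K), {d | polyTIN L α π {u : User L | u.1 ∈ M} d} ⊆
      {d | polyTIN L α π {u : User L | u.1 ∈ M ∪ F} d} := by
    intro F
    induction F using Finset.induction with
    | empty => simp
    | insert a F _ ih =>
      rw [Finset.coe_insert, Set.union_insert]
      exact ih.trans (polyTIN_subset_insert_cell hα hC2 _ a)
  simpa [Set.union_eq_self_of_subset_left hMN] using hunion N.toFinite.toFinset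

end Monotone

theorem polyTIN_id_cells_monotone_general {K : ℕ}
    (L : Fin K → ℕ)
    (α : (k : Fin K) → Fin (L k) → Fin K → ℝ)
    (hα : ∀ (k : Fin K) (l : Fin (L k)) (i : Fin K), 0 ≤ α k l i)
    (hC2 : ∀ (i : Fin K) (li : Fin (L i)) (j : Fin K), j ≠ i →
      ∀ (k : Fin K), k ≠ i → ∀ (lk : Fin (L k)),
      α i li j + α k lk i - (if k = j then 0 else α k lk j) ≤ α i li i) :
    (∀ (M : Set (Fin K)) (k : Fin K),
      {d : (k : Fin K) → Fin (L k) → ℝ |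
          polyTIN L α (idOrder L) {u : User L | u.1 ∈ M} d} ⊆
      {d : (k : Fin K) → Fin (L k) → ℝ |
          polyTIN L α (idOrder L) {u : User L | u.1 ∈ insert k M} d}) ∧
    (∀ M : Set (Fin K),
      {d : (k : Fin K) → Fin (L k) → ℝ |
          polyTIN L α (idOrder L) {u : User L | u.1 ∈ M} d} ⊆
      {d : (k : Fin K) → Fin (L k) → ℝ |
          polyTIN L α (idOrder L) Set.univ d}) :=
  ⟨polyTIN_subset_insert_cell hα hC2, fun _ => by
    simpa using polyTIN_subset_of_cells_subset (π := idOrder L) hα hC2 (Set.subset_univ _)⟩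

/-- **Step 3 of the convexity proof (monotonicity in the set of active cells).**
Assume (C2). Adding a full cell to a union of full cells can only enlarge the polyhedral
TIN region under the identity decoding order:
`P_id(∪_{i∈M} K_i) ⊆ P_id(∪_{i∈M∪{k}} K_i)` for every `M` and `k`; consequently
`P_id(∪_{i∈M} K_i) ⊆ P_id(𝒦)` for every `M`. -/
theorem polyTIN_id_cells_monotone {K : ℕ} (hK : 1 ≤ K)
    (L : Fin K → ℕ) (hL : ∀ k, 1 ≤ L k)
    (α : (k : Fin K) → Fin (L k) → Fin K → ℝ)
    (hα : ∀ (k : Fin K) (l : Fin (L k)) (i : Fin K), 0 ≤ α k l i)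
    (hmono : ∀ k : Fin K, Monotone (fun l : Fin (L k) => α k l k))
    (hC2 : ∀ (i : Fin K) (li : Fin (L i)) (j : Fin K), j ≠ i →
      ∀ (k : Fin K), k ≠ i → ∀ (lk : Fin (L k)),
      α i li j + α k lk i - (if k = j then 0 else α k lk j) ≤ α i li i) :
    (∀ (M : Set (Fin K)) (k : Fin K),
      {d : (k : Fin K) → Fin (L k) → ℝ |
          polyTIN L α (idOrder L) {u : User L | u.1 ∈ M} d} ⊆
      {d : (k : Fin K) → Fin (L k) → ℝ |
          polyTIN L α (idOrder L) {u : User L | u.1 ∈ insert k M} d}) ∧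
    (∀ M : Set (Fin K),
      {d : (k : Fin K) → Fin (L k) → ℝ |
          polyTIN L α (idOrder L) {u : User L | u.1 ∈ M} d} ⊆
      {d : (k : Fin K) → Fin (L k) → ℝ |
          polyTIN L α (idOrder L) Set.univ d}) :=
  polyTIN_id_cells_monotone_general L α hα hC2
end
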